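/- The p-Wasserstein decomposition is exact: for any p ∈ ℕ and distributions F, G, WD_p(F,G) = ∫_0^1 |F^{-1}(τ) − G^{-1}(τ)|^p dτ equals Shift_+^{WD_p} + Shift_-^{WD_p} + Disp_+^{WD_p} + Disp_-^{WD_p}, where, writing z^{[p]} = sgn(z)|z|^p, Disp_+^{WD_p}(F,G) = (1/2)∫_0^1 [ (F^{-1}((1+α)/2) − G^{-1}((1+α)/2))^{[p]} − (F^{-1}((1−α)/2) − G^{-1}((1−α)/2))^{[p]} ]_+ dα, Shift_+^{WD_p}(F,G) = ∫_0^1 [ min{ (F^{-1}((1+α)/2) − G^{-1}((1+α)/2))^{[p]}, (F^{-1}((1−α)/2) − G^{-1}((1−α)/2))^{[p]} } ]_+ dα, and the minus components arise by exchanging F and G. -/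

import Mathlib

/-!
Substituting `τ = (1 ± α) / 2` on the two halves of `[0, 1]` gives
`WD_p = ½ ∫₀¹ (|u α|^p + |v α|^p) dα`, with `u α`, `v α` the quantile differences at the levels
`(1 + α) / 2` and `(1 - α) / 2`. Since `|z|^p = |z^{[p]}|` and `(-z)^{[p]} = -z^{[p]}`, the
integrand is `|a| + |b|` with `a = u^{[p]}`, `b = v^{[p]}`, and pointwise
`|a| + |b| = 2 [min(a, b)]_+ + 2 [min(-a, -b)]_+ + [a - b]_+ + [b - a]_+`:
when `a` and `b` share a sign, `|a| + |b|` is twice the smaller modulus plus `|a - b|`, and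
otherwise it is `|a - b|` alone. Exchanging `F` and `G` replaces `a, b` by `-a, -b`.
-/

open MeasureTheory intervalIntegral

/-- Generalized quantile function (left-inverse of a CDF). -/
noncomputable def quantile (F : ℝ → ℝ) (τ : ℝ) : ℝ := sInf {x | τ ≤ F x}

/-- Signed `p`-th power `z^{[p]} = sgn(z)·|z|^p`. -/
noncomputable def sgnPow (p : ℕ) (z : ℝ) : ℝ := Real.sign z * |z| ^ p

/-- `Disp₊^{WD_p}` component. -/
noncomputable def wdDispPlus (p : ℕ) (qF qG : ℝ → ℝ) : ℝ :=
  (1 / 2) * ∫ α in (0:ℝ)..1,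
    max (sgnPow p (qF ((1 + α) / 2) - qG ((1 + α) / 2)) -
         sgnPow p (qF ((1 - α) / 2) - qG ((1 - α) / 2))) 0

/-- `Shift₊^{WD_p}` component. -/
noncomputable def wdShiftPlus (p : ℕ) (qF qG : ℝ → ℝ) : ℝ :=
  ∫ α in (0:ℝ)..1,
    max (min (sgnPow p (qF ((1 + α) / 2) - qG ((1 + α) / 2)))
             (sgnPow p (qF ((1 - α) / 2) - qG ((1 - α) / 2)))) 0

theorem integral_zero_one_eq_half_smul_integral_fold {E : Type*} [NormedAddCommGroup E]
    [NormedSpace ℝ E] {f : ℝ → E} (hf : IntervalIntegrable f volume 0 1) :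
    ∫ τ in (0:ℝ)..1, f τ =
      (1 / 2 : ℝ) • ∫ α in (0:ℝ)..1, (f ((1 + α) / 2) + f ((1 - α) / 2)) := by
  have mono : ∀ {g : ℝ → E} {a b c d : ℝ}, IntervalIntegrable g volume a b →
      c ∈ Set.uIcc a b → d ∈ Set.uIcc a b → IntervalIntegrable g volume c d :=
    fun hg hc hd => hg.mono_set (Set.uIcc_subset_uIcc hc hd)
  have hhalf : IntervalIntegrable (fun x => f (x / 2)) volume 0 2 := by
    simpa [div_eq_mul_inv, mul_comm] using hf.comp_mul_left (c := 1 / 2)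
  have hplus : IntervalIntegrable (fun α => f ((1 + α) / 2)) volume 0 1 :=
    mono (hhalf.comp_add_left 1) (by norm_num [Set.mem_uIcc]) (by norm_num [Set.mem_uIcc])
  have hminus : IntervalIntegrable (fun α => f ((1 - α) / 2)) volume 0 1 :=
    mono (hhalf.comp_sub_left 1) (by norm_num [Set.mem_uIcc]) (by norm_num [Set.mem_uIcc])
  rw [integral_add hplus hminus]
  simp only [add_div, sub_div]
  rw [integral_comp_add_div f two_ne_zero, integral_comp_sub_div f two_ne_zero]
  norm_num [smul_add, smul_smul]
  rw [add_comm]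
  exact (integral_add_adjacent_intervals (mono hf (by norm_num [Set.mem_uIcc]) (by norm_num))
    (mono hf (by norm_num [Set.mem_uIcc]) (by norm_num [Set.mem_uIcc]))).symm

theorem sgnPow_neg (p : ℕ) (z : ℝ) : sgnPow p (-z) = -sgnPow p z := by
  simp [sgnPow, Real.sign_neg]

theorem abs_sgnPow {p : ℕ} (hp : p ≠ 0) (z : ℝ) : |sgnPow p z| = |z| ^ p := by
  rcases lt_trichotomy z 0 with h | rfl | h
  · simp [sgnPow, Real.sign_of_neg h]
  · simp [sgnPow, hp]
  · simp [sgnPow, Real.sign_of_pos h]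

theorem abs_add_abs_eq_two_mul_posPart_min_add (a b : ℝ) : |a| + |b| =
    2 * max (min a b) 0 + 2 * max (min (-a) (-b)) 0 + max (a - b) 0 + max (-a - -b) 0 := by
  rcases le_total 0 a with ha | ha <;> rcases le_total 0 b with hb | hb <;>
    rcases le_total a b with h | h <;>
    simp only [abs_of_nonneg, abs_of_nonpos, max_def, min_def, *] <;> split_ifs <;> linarith

theorem abs_pow_add_abs_pow_eq_two_mul_posPart_min_add {p : ℕ} (hp : p ≠ 0) (u v : ℝ) :
    |u| ^ p + |v| ^ p =
      2 * max (min (sgnPow p u) (sgnPow p v)) 0 + 2 * max (min (sgnPow p (-u)) (sgnPow p (-v))) 0 +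
        max (sgnPow p u - sgnPow p v) 0 + max (sgnPow p (-u) - sgnPow p (-v)) 0 := by
  rw [sgnPow_neg, sgnPow_neg, ← abs_sgnPow hp u, ← abs_sgnPow hp v]
  exact abs_add_abs_eq_two_mul_posPart_min_add _ _

section Integrands

variable (p : ℕ) (qF qG : ℝ → ℝ)

noncomputable def wdShiftIntegrand (α : ℝ) : ℝ :=
  max (min (sgnPow p (qF ((1 + α) / 2) - qG ((1 + α) / 2)))
           (sgnPow p (qF ((1 - α) / 2) - qG ((1 - α) / 2)))) 0

noncomputable def wdDispIntegrand (α : ℝ) : ℝ :=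
  max (sgnPow p (qF ((1 + α) / 2) - qG ((1 + α) / 2)) -
       sgnPow p (qF ((1 - α) / 2) - qG ((1 - α) / 2))) 0

theorem wdShiftPlus_eq_integral :
    wdShiftPlus p qF qG = ∫ α in (0:ℝ)..1, wdShiftIntegrand p qF qG α := rfl

theorem wdDispPlus_eq_integral :
    wdDispPlus p qF qG = 1 / 2 * ∫ α in (0:ℝ)..1, wdDispIntegrand p qF qG α := rfl

end Integrands

theorem integral_abs_sub_pow_fold_eq {p : ℕ} (hp : p ≠ 0) {qF qG : ℝ → ℝ}
    (hSp : IntervalIntegrable (wdShiftIntegrand p qF qG) volume 0 1)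
    (hSm : IntervalIntegrable (wdShiftIntegrand p qG qF) volume 0 1)
    (hDp : IntervalIntegrable (wdDispIntegrand p qF qG) volume 0 1)
    (hDm : IntervalIntegrable (wdDispIntegrand p qG qF) volume 0 1) :
    ∫ α in (0:ℝ)..1, (|qF ((1 + α) / 2) - qG ((1 + α) / 2)| ^ p +
        |qF ((1 - α) / 2) - qG ((1 - α) / 2)| ^ p) =
      2 * wdShiftPlus p qF qG + 2 * wdShiftPlus p qG qF +
        2 * wdDispPlus p qF qG + 2 * wdDispPlus p qG qF := by
  have hpoint : ∀ α : ℝ, |qF ((1 + α) / 2) - qG ((1 + α) / 2)| ^ p +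
      |qF ((1 - α) / 2) - qG ((1 - α) / 2)| ^ p =
        2 * wdShiftIntegrand p qF qG α + 2 * wdShiftIntegrand p qG qF α +
          wdDispIntegrand p qF qG α + wdDispIntegrand p qG qF α := fun α => by
    simpa only [wdShiftIntegrand, wdDispIntegrand, neg_sub] using
      abs_pow_add_abs_pow_eq_two_mul_posPart_min_add hp (qF ((1 + α) / 2) - qG ((1 + α) / 2))
        (qF ((1 - α) / 2) - qG ((1 - α) / 2))
  rw [integral_congr fun α _ => hpoint α,
    integral_add (((hSp.const_mul 2).add (hSm.const_mul 2)).add hDp) hDm,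
    integral_add ((hSp.const_mul 2).add (hSm.const_mul 2)) hDp,
    integral_add (hSp.const_mul 2) (hSm.const_mul 2), intervalIntegral.integral_const_mul,
    intervalIntegral.integral_const_mul,
    wdShiftPlus_eq_integral, wdShiftPlus_eq_integral, wdDispPlus_eq_integral,
    wdDispPlus_eq_integral]
  ring

theorem wd_decomposition_exact_general (p : ℕ) (hp : 1 ≤ p) (F G : ℝ → ℝ)
    (hWD : IntervalIntegrable
      (fun τ => |quantile F τ - quantile G τ| ^ p) volume 0 1)
    (hSp : IntervalIntegrable (fun α =>
      max (min (sgnPow p (quantile F ((1 + α) / 2) - quantile G ((1 + α) / 2)))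
               (sgnPow p (quantile F ((1 - α) / 2) - quantile G ((1 - α) / 2)))) 0) volume 0 1)
    (hSm : IntervalIntegrable (fun α =>
      max (min (sgnPow p (quantile G ((1 + α) / 2) - quantile F ((1 + α) / 2)))
               (sgnPow p (quantile G ((1 - α) / 2) - quantile F ((1 - α) / 2)))) 0) volume 0 1)
    (hDp : IntervalIntegrable (fun α =>
      max (sgnPow p (quantile F ((1 + α) / 2) - quantile G ((1 + α) / 2)) -
           sgnPow p (quantile F ((1 - α) / 2) - quantile G ((1 - α) / 2))) 0) volume 0 1)
    (hDm : IntervalIntegrable (fun α =>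
      max (sgnPow p (quantile G ((1 + α) / 2) - quantile F ((1 + α) / 2)) -
           sgnPow p (quantile G ((1 - α) / 2) - quantile F ((1 - α) / 2))) 0) volume 0 1) :
    (∫ τ in (0:ℝ)..1, |quantile F τ - quantile G τ| ^ p) =
      wdShiftPlus p (quantile F) (quantile G) +
      wdShiftPlus p (quantile G) (quantile F) +
      wdDispPlus p (quantile F) (quantile G) +
      wdDispPlus p (quantile G) (quantile F) := by
  rw [integral_zero_one_eq_half_smul_integral_fold hWD, smul_eq_mul,
    integral_abs_sub_pow_fold_eq (Nat.one_le_iff_ne_zero.mp hp) hSp hSm hDp hDm]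
  ring

/-- The `WD_p` decomposition is exact. -/
theorem wd_decomposition_exact (p : ℕ) (hp : 1 ≤ p) (F G : ℝ → ℝ)
    (hF : Monotone F) (hG : Monotone G)
    (hF0 : Filter.Tendsto F Filter.atBot (nhds 0))
    (hF1 : Filter.Tendsto F Filter.atTop (nhds 1))
    (hG0 : Filter.Tendsto G Filter.atBot (nhds 0))
    (hG1 : Filter.Tendsto G Filter.atTop (nhds 1))
    (hWD : IntervalIntegrable
      (fun τ => |quantile F τ - quantile G τ| ^ p) volume 0 1)
    (hSp : IntervalIntegrable (fun α =>
      max (min (sgnPow p (quantile F ((1 + α) / 2) - quantile G ((1 + α) / 2)))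
               (sgnPow p (quantile F ((1 - α) / 2) - quantile G ((1 - α) / 2)))) 0) volume 0 1)
    (hSm : IntervalIntegrable (fun α =>
      max (min (sgnPow p (quantile G ((1 + α) / 2) - quantile F ((1 + α) / 2)))
               (sgnPow p (quantile G ((1 - α) / 2) - quantile F ((1 - α) / 2)))) 0) volume 0 1)
    (hDp : IntervalIntegrable (fun α =>
      max (sgnPow p (quantile F ((1 + α) / 2) - quantile G ((1 + α) / 2)) -
           sgnPow p (quantile F ((1 - α) / 2) - quantile G ((1 - α) / 2))) 0) volume 0 1)
    (hDm : IntervalIntegrable (fun α =>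
      max (sgnPow p (quantile G ((1 + α) / 2) - quantile F ((1 + α) / 2)) -
           sgnPow p (quantile G ((1 - α) / 2) - quantile F ((1 - α) / 2))) 0) volume 0 1) :
    (∫ τ in (0:ℝ)..1, |quantile F τ - quantile G τ| ^ p) =
      wdShiftPlus p (quantile F) (quantile G) +
      wdShiftPlus p (quantile G) (quantile F) +
      wdDispPlus p (quantile F) (quantile G) +
      wdDispPlus p (quantile G) (quantile F) :=
  wd_decomposition_exact_general p hp F G hWD hSp hSm hDp hDm
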